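/- Let a₃ > 0, b₄ > 0, b₆ > 0, and real constants a₇, a₉, a₁₀, and consider λ(τ, α̂, B) = a₃τ − b₄B² − b₆α̂² + a₇B²α̂ + a₉τα̂ + a₁₀τ² where α̂ = α² − α_c². For fixed small B, the value of τ minimizing the critical Taylor number (solving λ = 0 and ∂λ/∂α̂ = 0, to leading order in B²) is attained at α̂ = [(a₇/(2b₆)) + a₉b₄/(2b₆a₃)]B² + O(B⁴), and the corresponding critical τ satisfies τ = (b₄/a₃)B² − (1/(4b₆a₃³))[(a₃a₇ + a₉b₄)² + 4a₁₀b₆b₄²]B⁴ + O(B⁶); in particular τ > 0 for small nonzero B when b₄, a₃ > 0. -/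

import Mathlib

open Filter Asymptotics

set_option maxHeartbeats 1600000 in
/-- perturbative minimization of the neutral-stability surface:
there exist branches α̂(B), τ(B) solving λ = 0, ∂λ/∂α̂ = 0 for small B, with the
stated expansions in powers of B², and τ(B) > 0 for small nonzero B. -/
theorem stmt17 (a₃ b₄ b₆ a₇ a₉ a₁₀ : ℝ)
    (ha₃ : 0 < a₃) (hb₄ : 0 < b₄) (hb₆ : 0 < b₆)
    (lam : ℝ → ℝ → ℝ → ℝ)
    (hlam : lam = fun τ αh B =>
      a₃ * τ - b₄ * B ^ 2 - b₆ * αh ^ 2 + a₇ * B ^ 2 * αh + a₉ * τ * αh + a₁₀ * τ ^ 2) :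
    ∃ αh τc : ℝ → ℝ,
      (∀ᶠ B in nhds (0 : ℝ),
        lam (τc B) (αh B) B = 0 ∧ deriv (fun a => lam (τc B) a B) (αh B) = 0) ∧
      (fun B => αh B - (a₇ / (2 * b₆) + a₉ * b₄ / (2 * b₆ * a₃)) * B ^ 2)
        =O[nhds (0 : ℝ)] (fun B => B ^ 4) ∧
      (fun B => τc B - (b₄ / a₃) * B ^ 2
          + (1 / (4 * b₆ * a₃ ^ 3)) * ((a₃ * a₇ + a₉ * b₄) ^ 2 + 4 * a₁₀ * b₆ * b₄ ^ 2) * B ^ 4)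
        =O[nhds (0 : ℝ)] (fun B => B ^ 6) ∧
      (∀ᶠ B in nhdsWithin (0 : ℝ) {0}ᶜ, 0 < τc B) := by
  subst hlam
  have hb₆' : b₆ ≠ 0 := ne_of_gt hb₆
  have ha₃' : a₃ ≠ 0 := ne_of_gt ha₃
  set A : ℝ := a₉ ^ 2 / (4 * b₆) + a₁₀ with hA
  set c₄ : ℝ := (1 / (4 * b₆ * a₃ ^ 3)) * ((a₃ * a₇ + a₉ * b₄) ^ 2 + 4 * a₁₀ * b₆ * b₄ ^ 2)
    with hc₄
  set bb : ℝ → ℝ := fun B => a₃ + a₇ * a₉ * B ^ 2 / (2 * b₆) with hbb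
  set CC : ℝ → ℝ := fun B => a₇ ^ 2 * B ^ 4 / (4 * b₆) - b₄ * B ^ 2 with hCC
  set rad : ℝ → ℝ := fun B => (bb B) ^ 2 - 4 * A * CC B with hrad
  set D : ℝ → ℝ := fun B => bb B + Real.sqrt (rad B) with hD
  set τc : ℝ → ℝ := fun B => -2 * CC B / D B with hτ
  set αh : ℝ → ℝ := fun B => (a₇ * B ^ 2 + a₉ * τc B) / (2 * b₆) with hαh
  set ts : ℝ → ℝ := fun B => (b₄ / a₃) * B ^ 2 - c₄ * B ^ 4 with hts
  set q : ℝ → ℝ := fun B => A * c₄ ^ 2 * B ^ 2 - 2 * A * (b₄ / a₃) * c₄ - a₇ * a₉ * c₄ / (2 * b₆)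
    with hq
  -- continuity facts
  have hbbc : Continuous bb := by rw [hbb]; fun_prop
  have hCCc : Continuous CC := by rw [hCC]; fun_prop
  have hradc : Continuous rad := by rw [hrad]; exact (hbbc.pow 2).sub (continuous_const.mul hCCc)
  have hDc : Continuous D := by rw [hD]; exact hbbc.add (Real.continuous_sqrt.comp hradc)
  have hbb0 : bb 0 = a₃ := by simp [hbb]
  have hCC0 : CC 0 = 0 := by simp [hCC]
  have hrad0 : rad 0 = a₃ ^ 2 := by simp [hrad, hbb0, hCC0]
  have hD0 : D 0 = 2 * a₃ := by
    simp only [hD, hrad0, hbb0]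
    rw [Real.sqrt_sq ha₃.le]; ring
  -- eventual facts
  have hevD : ∀ᶠ B in nhds (0 : ℝ), a₃ < D B := by
    have h := hDc.continuousAt (x := (0 : ℝ))
    rw [ContinuousAt, hD0] at h
    exact h.eventually (eventually_gt_nhds (by linarith))
  have hevrad : ∀ᶠ B in nhds (0 : ℝ), 0 < rad B := by
    have h := hradc.continuousAt (x := (0 : ℝ))
    rw [ContinuousAt, hrad0] at h
    exact h.eventually (eventually_gt_nhds (by positivity))
  -- the quadratic identity P (τc B) = 0
  have key : ∀ B : ℝ, 0 < rad B → a₃ < D B →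
      A * (τc B) ^ 2 + bb B * τc B + CC B = 0 := by
    intro B h2 h1
    have hDne : D B ≠ 0 := (ha₃.trans h1).ne'
    have hs : Real.sqrt (rad B) ^ 2 = (bb B) ^ 2 - 4 * A * CC B := by
      rw [Real.sq_sqrt h2.le, hrad]
    have hDB : D B = bb B + Real.sqrt (rad B) := rfl
    rw [hτ]
    simp only
    rw [hDB]
    have hDne' : bb B + Real.sqrt (rad B) ≠ 0 := by rw [← hDB]; exact hDne
    rw [div_eq_mul_inv]
    set x := (bb B + Real.sqrt (rad B))⁻¹ with hxdef
    have hx : (bb B + Real.sqrt (rad B)) * x = 1 := mul_inv_cancel₀ hDne'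
    linear_combination (CC B * x ^ 2) * hs
      + (2 * bb B * CC B * x - CC B * (1 + (bb B + Real.sqrt (rad B)) * x)) * hx
  -- continuity of τc at 0
  have hτcont : ContinuousAt τc 0 := by
    rw [hτ]
    exact ContinuousAt.div (by fun_prop) hDc.continuousAt (by rw [hD0]; positivity)
  have hτc0 : τc 0 = 0 := by simp [hτ, hCC0]
  -- goal 1 : the two equations hold eventually
  have goal1 : ∀ᶠ B in nhds (0 : ℝ),
      (fun τ α B => a₃ * τ - b₄ * B ^ 2 - b₆ * α ^ 2 + a₇ * B ^ 2 * α + a₉ * τ * α + a₁₀ * τ ^ 2)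
        (τc B) (αh B) B = 0 ∧
      deriv (fun a =>
        (fun τ α B => a₃ * τ - b₄ * B ^ 2 - b₆ * α ^ 2 + a₇ * B ^ 2 * α + a₉ * τ * α + a₁₀ * τ ^ 2)
          (τc B) a B) (αh B) = 0 := by
    filter_upwards [hevD, hevrad] with B h1 h2
    constructor
    · show a₃ * τc B - b₄ * B ^ 2 - b₆ * (αh B) ^ 2 + a₇ * B ^ 2 * αh B +
          a₉ * τc B * αh B + a₁₀ * (τc B) ^ 2 = 0
      have hexp : a₃ * τc B - b₄ * B ^ 2 - b₆ * (αh B) ^ 2 + a₇ * B ^ 2 * αh B +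
          a₉ * τc B * αh B + a₁₀ * (τc B) ^ 2
          = A * (τc B) ^ 2 + bb B * τc B + CC B := by
        rw [hαh]; simp only; rw [hA, hbb, hCC]; simp only
        field_simp
        ring
      rw [hexp]
      exact key B h2 h1
    · show deriv (fun a => a₃ * τc B - b₄ * B ^ 2 - b₆ * a ^ 2 + a₇ * B ^ 2 * a
          + a₉ * τc B * a + a₁₀ * (τc B) ^ 2) (αh B) = 0
      have hpow : HasDerivAt (fun a : ℝ => a ^ 2) (2 * αh B) (αh B) := by
        simpa using hasDerivAt_pow 2 (αh B)
      have h : HasDerivAt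
          (fun a => a₃ * τc B - b₄ * B ^ 2 - b₆ * a ^ 2 + a₇ * B ^ 2 * a + a₉ * τc B * a
            + a₁₀ * (τc B) ^ 2)
          (0 - b₆ * (2 * αh B) + a₇ * B ^ 2 * 1 + a₉ * τc B * 1 + 0) (αh B) :=
        ((((hasDerivAt_const (αh B) (a₃ * τc B - b₄ * B ^ 2)).sub (hpow.const_mul b₆)).add
          ((hasDerivAt_id (αh B)).const_mul (a₇ * B ^ 2))).add
          ((hasDerivAt_id (αh B)).const_mul (a₉ * τc B))).add
          (hasDerivAt_const (αh B) (a₁₀ * (τc B) ^ 2))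
      rw [h.deriv, hαh]
      simp only
      field_simp
      ring
  -- P(ts B) = B^6 * q B
  have hPts : ∀ B : ℝ, A * (ts B) ^ 2 + bb B * ts B + CC B = B ^ 6 * q B := by
    intro B
    rw [hts, hq, hA, hbb, hCC, hc₄]
    simp only
    field_simp
    ring
  -- main big-O estimate for τc - ts
  have hτO : (fun B => τc B - ts B) =O[nhds (0 : ℝ)] (fun B => B ^ 6) := by
    rw [isBigO_iff]
    refine ⟨2 * (|q 0| + 1) / a₃, ?_⟩
    -- eventual bound on the "denominator" E
    have hEcont : ContinuousAt (fun B => A * (τc B + ts B) + bb B) 0 := by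
      exact ((continuousAt_const.mul (hτcont.add (by fun_prop))).add hbbc.continuousAt)
    have hE0 : A * (τc 0 + ts 0) + bb 0 = a₃ := by
      rw [hτc0, hbb0, hts]; simp
    have hevE : ∀ᶠ B in nhds (0 : ℝ), a₃ / 2 < A * (τc B + ts B) + bb B := by
      rw [ContinuousAt, hE0] at hEcont
      exact hEcont.eventually (eventually_gt_nhds (by linarith))
    have hqcont : ContinuousAt q 0 := by rw [hq]; fun_prop
    have hevq : ∀ᶠ B in nhds (0 : ℝ), |q B| < |q 0| + 1 := by
      have : ContinuousAt (fun B => |q B|) 0 := hqcont.abs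
      rw [ContinuousAt] at this
      exact this.eventually (eventually_lt_nhds (by linarith [abs_nonneg (q 0)]))
    filter_upwards [hevD, hevrad, hevE, hevq] with B h1 h2 h3 h4
    have hkey := key B h2 h1
    have hprod : (τc B - ts B) * (A * (τc B + ts B) + bb B) = -(B ^ 6 * q B) := by
      linear_combination hkey - hPts B
    have hEpos : (0 : ℝ) < A * (τc B + ts B) + bb B := lt_trans (half_pos ha₃) h3
    have heq : τc B - ts B = -(B ^ 6 * q B) / (A * (τc B + ts B) + bb B) :=
      (eq_div_iff hEpos.ne').mpr hprod
    rw [Real.norm_eq_abs, Real.norm_eq_abs, heq, abs_div, abs_neg, abs_mul,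
      abs_of_pos hEpos, div_le_iff₀ hEpos]
    have hB6 : (0 : ℝ) ≤ |B ^ 6| := abs_nonneg _
    have hq0 : (0 : ℝ) ≤ |q 0| := abs_nonneg _
    have h5 : |B ^ 6| * |q B| ≤ |B ^ 6| * (|q 0| + 1) := by
      exact mul_le_mul_of_nonneg_left h4.le hB6
    calc |B ^ 6| * |q B| ≤ |B ^ 6| * (|q 0| + 1) := h5
      _ = 2 * (|q 0| + 1) / a₃ * |B ^ 6| * (a₃ / 2) := by field_simp
      _ ≤ 2 * (|q 0| + 1) / a₃ * |B ^ 6| * (A * (τc B + ts B) + bb B) := by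
          apply mul_le_mul_of_nonneg_left h3.le
          positivity
  -- goal 3
  have goal3 : (fun B => τc B - (b₄ / a₃) * B ^ 2
      + (1 / (4 * b₆ * a₃ ^ 3)) * ((a₃ * a₇ + a₉ * b₄) ^ 2 + 4 * a₁₀ * b₆ * b₄ ^ 2) * B ^ 4)
      =O[nhds (0 : ℝ)] (fun B => B ^ 6) := by
    have : (fun B => τc B - (b₄ / a₃) * B ^ 2
        + (1 / (4 * b₆ * a₃ ^ 3)) * ((a₃ * a₇ + a₉ * b₄) ^ 2 + 4 * a₁₀ * b₆ * b₄ ^ 2) * B ^ 4)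
        = fun B => τc B - ts B := by
      funext B; rw [hts, hc₄]; ring
    rw [this]; exact hτO
  -- goal 2
  have h64 : (fun B : ℝ => B ^ 6) =O[nhds (0 : ℝ)] (fun B => B ^ 4) := by
    rw [isBigO_iff]
    refine ⟨1, ?_⟩
    have : ∀ᶠ B : ℝ in nhds 0, |B| ≤ 1 := by
      have := eventually_abs_sub_lt (0 : ℝ) (zero_lt_one)
      filter_upwards [this] with B hB
      simpa using hB.le
    filter_upwards [this] with B hB
    rw [Real.norm_eq_abs, Real.norm_eq_abs, abs_pow, abs_pow, one_mul]
    calc |B| ^ 6 = |B| ^ 4 * |B| ^ 2 := by ring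
      _ ≤ |B| ^ 4 * 1 := by
          apply mul_le_mul_of_nonneg_left _ (by positivity)
          calc |B| ^ 2 ≤ 1 ^ 2 := pow_le_pow_left₀ (abs_nonneg B) hB 2
            _ = 1 := one_pow 2
      _ = |B| ^ 4 := mul_one _
  have hτO4 : (fun B => τc B - (b₄ / a₃) * B ^ 2) =O[nhds (0 : ℝ)] (fun B => B ^ 4) := by
    have h1 : (fun B => τc B - ts B) =O[nhds (0 : ℝ)] (fun B => B ^ 4) := hτO.trans h64
    have h2 : (fun B : ℝ => -c₄ * B ^ 4) =O[nhds (0 : ℝ)] (fun B => B ^ 4) :=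
      (isBigO_refl (fun B : ℝ => B ^ 4) _).const_mul_left (-c₄)
    have : (fun B => τc B - (b₄ / a₃) * B ^ 2)
        = fun B => (τc B - ts B) + (-c₄ * B ^ 4) := by
      funext B; rw [hts]; ring
    rw [this]; exact h1.add h2
  have goal2 : (fun B => αh B - (a₇ / (2 * b₆) + a₉ * b₄ / (2 * b₆ * a₃)) * B ^ 2)
      =O[nhds (0 : ℝ)] (fun B => B ^ 4) := by
    have haux : ∀ t B : ℝ, (a₇ * B ^ 2 + a₉ * t) / (2 * b₆)
        - (a₇ / (2 * b₆) + a₉ * b₄ / (2 * b₆ * a₃)) * B ^ 2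
        = (a₉ / (2 * b₆)) * (t - (b₄ / a₃) * B ^ 2) := by
      intro t B; field_simp; ring
    have : (fun B => αh B - (a₇ / (2 * b₆) + a₉ * b₄ / (2 * b₆ * a₃)) * B ^ 2)
        = fun B => (a₉ / (2 * b₆)) * (τc B - (b₄ / a₃) * B ^ 2) := by
      funext B; exact haux (τc B) B
    rw [this]
    exact hτO4.const_mul_left _
  -- goal 4 : positivity
  have goal4 : ∀ᶠ B in nhdsWithin (0 : ℝ) {0}ᶜ, 0 < τc B := by
    have hfac : ∀ᶠ B in nhds (0 : ℝ), a₇ ^ 2 * B ^ 2 / (4 * b₆) - b₄ < 0 := by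
      have hc : ContinuousAt (fun B : ℝ => a₇ ^ 2 * B ^ 2 / (4 * b₆) - b₄) 0 := by fun_prop
      have hc' : Tendsto (fun B : ℝ => a₇ ^ 2 * B ^ 2 / (4 * b₆) - b₄) (nhds 0) (nhds (-b₄)) := by
        have h0 : a₇ ^ 2 * (0:ℝ) ^ 2 / (4 * b₆) - b₄ = -b₄ := by simp
        rw [ContinuousAt] at hc
        simpa [h0] using hc
      exact hc'.eventually (eventually_lt_nhds (by linarith))
    filter_upwards [hfac.filter_mono nhdsWithin_le_nhds, hevD.filter_mono nhdsWithin_le_nhds,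
      self_mem_nhdsWithin] with B h1 h2 (h3 : B ∈ ({0}ᶜ : Set ℝ))
    have hBne : B ≠ 0 := h3
    have hB2 : (0 : ℝ) < B ^ 2 := by positivity
    have hCCneg : CC B < 0 := by
      rw [hCC]; simp only
      have : a₇ ^ 2 * B ^ 4 / (4 * b₆) - b₄ * B ^ 2 = B ^ 2 * (a₇ ^ 2 * B ^ 2 / (4 * b₆) - b₄) := by
        ring
      rw [this]
      exact mul_neg_of_pos_of_neg hB2 h1
    rw [hτ]; simp only
    apply div_pos (by linarith) (lt_trans ha₃ h2)
  exact ⟨αh, τc, goal1, goal2, goal3, goal4⟩
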